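/- Let d ≥ 1 and k ≤ 6 be natural numbers and let m₁, …, m_k be natural numbers, each of which is even, such that m₁ + ⋯ + m_k = 3(d − 1) and m₁² + ⋯ + m_k² = d² − 1. Then d = 1 or d = 5. -/

import Mathlib

/-!
Cauchy–Schwarz gives `(∑ mᵢ)² ≤ k ∑ mᵢ² ≤ 6 ∑ mᵢ²`, i.e. `9(d-1)² ≤ 6(d²-1)`, so `d ≤ 5`.
Conversely an even natural number satisfies `2m ≤ m²` (as `m = 0` or `m ≥ 2`), so
`6(d-1) = 2 ∑ mᵢ ≤ ∑ mᵢ² = d² - 1`, which forces `d = 1` or `d ≥ 5`.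
-/

open Finset

theorem Even.two_mul_le_sq {m : ℕ} (hm : Even m) : 2 * m ≤ m ^ 2 := by
  obtain ⟨t, rfl⟩ := hm
  nlinarith [Nat.le_self_pow two_ne_zero t]

theorem two_mul_sum_le_sum_sq_of_even {ι : Type*} (s : Finset ι) (m : ι → ℕ)
    (heven : ∀ i ∈ s, Even (m i)) : 2 * ∑ i ∈ s, m i ≤ ∑ i ∈ s, m i ^ 2 := by
  rw [mul_sum]
  exact sum_le_sum fun i hi => (heven i hi).two_mul_le_sq

theorem eq_one_or_eq_five_of_sq_bounds {d : ℕ} (hd : 1 ≤ d)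
    (hupper : (3 * (d - 1)) ^ 2 ≤ 6 * (d ^ 2 - 1)) (hlower : 2 * (3 * (d - 1)) ≤ d ^ 2 - 1) :
    d = 1 ∨ d = 5 := by
  obtain ⟨e, rfl⟩ : ∃ e, d = e + 1 := ⟨d - 1, by omega⟩
  have hsq : (e + 1) ^ 2 - 1 = e ^ 2 + 2 * e := by ring_nf; omega
  rw [hsq, add_tsub_cancel_right] at hupper hlower
  have he4 : e ≤ 4 := by nlinarith
  interval_cases e <;> omega

/-- If `d ≥ 1`, `k ≤ 6` and `m₁, …, m_k` are even natural numbers with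
`∑ mᵢ = 3(d − 1)` and `∑ mᵢ² = d² − 1`, then `d = 1` or `d = 5`. -/
theorem stmt17 (d k : ℕ) (hd : 1 ≤ d) (hk : k ≤ 6) (m : Fin k → ℕ)
    (heven : ∀ i, Even (m i)) (hsum : ∑ i, m i = 3 * (d - 1))
    (hsq : ∑ i, (m i) ^ 2 = d ^ 2 - 1) : d = 1 ∨ d = 5 := by
  have hcs : (∑ i, m i) ^ 2 ≤ 6 * ∑ i, m i ^ 2 := calc
    _ ≤ k * ∑ i, m i ^ 2 := by simpa using sq_sum_le_card_mul_sum_sq (s := univ) (f := m)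
    _ ≤ 6 * ∑ i, m i ^ 2 := Nat.mul_le_mul_right _ hk
  have hev := two_mul_sum_le_sum_sq_of_even univ m fun i _ => heven i
  rw [hsum, hsq] at hcs hev
  exact eq_one_or_eq_five_of_sq_bounds hd hcs hev
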